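/- Every live local configuration is deadlock-free. -/

import Mathlib

/-- Actions: send/receive of a message type to/from a participant. -/
inductive Act where
  | send : String → String → Act
  | recv : String → String → Act
deriving DecidableEq

/-- Local protocols. -/
inductive LocalT where
  | done : LocalT
  | var : String → LocalT
  | act : Act → LocalT → LocalT
  | choice : LocalT → LocalT → LocalT
  | loop : String → LocalT → LocalT
deriving DecidableEq

/-- Syntactic size of a local protocol. -/
def LocalT.size : LocalT → ℕ
  | .done => 1
  | .var _ => 1
  | .act _ T => 1 + T.size
  | .choice T1 T2 => T1.size + T2.size
  | .loop _ T => T.size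

/-- Capture-avoiding (w.r.t. same-name binders) substitution T[L/t]. -/
def LocalT.subst : LocalT → LocalT → String → LocalT
  | .done, _, _ => .done
  | .var t', L, t => if t' = t then L else .var t'
  | .act a T, L, t => .act a (T.subst L t)
  | .choice T1 T2, L, t => .choice (T1.subst L t) (T2.subst L t)
  | .loop t' T, L, t => if t' = t then .loop t' T else .loop t' (T.subst L t)

/-- Free recursion variables. -/
def LocalT.free : LocalT → Set String
  | .done => ∅
  | .var t => {t}
  | .act _ T => T.free
  | .choice T1 T2 => T1.free ∪ T2.free
  | .loop t T => T.free \ {t}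

/-- Participants of a local protocol. -/
def LocalT.parts : LocalT → Set String
  | .done => ∅
  | .var _ => ∅
  | .act (.send p _) T => {p} ∪ T.parts
  | .act (.recv p _) T => {p} ∪ T.parts
  | .choice T1 T2 => T1.parts ∪ T2.parts
  | .loop _ T => T.parts

/-- Subject participant of an action. -/
def Act.subj : Act → String
  | .send p _ => p
  | .recv p _ => p

/-- Local transition relation. -/
inductive Lts : LocalT → Act → LocalT → Prop
  | act {a T} : Lts (.act a T) a T
  | choiceL {T1 T2 a T'} : Lts T1 a T' → Lts (.choice T1 T2) a T'
  | choiceR {T1 T2 a T'} : Lts T2 a T' → Lts (.choice T1 T2) a T'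
  | loop {t T a T'} : Lts (T.subst (.loop t T) t) a T' → Lts (.loop t T) a T'

/-- A local configuration: a partial map from participants to local protocols. -/
abbrev Config := String → Option LocalT

/-- A communication action: sender, receiver, message type. -/
structure CAct where
  sender : String
  receiver : String
  msg : String

def Config.update (L : Config) (p : String) (T : LocalT) : Config :=
  fun q => if q = p then some T else L q

/-- Communication transitions: synchronisation of dual send/receive actions. -/
inductive CStep : Config → CAct → Config → Prop
  | step {L : Config} {p q U T1 T2 T1' T2'} (hpq : p ≠ q)
      (hp : L p = some T1) (hq : L q = some T2)
      (h1 : Lts T1 (.send q U) T1') (h2 : Lts T2 (.recv p U) T2') :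
      CStep L ⟨p, q, U⟩ ((L.update p T1').update q T2')

/-- Reachability via communication transitions. -/
def Reach (L L' : Config) : Prop :=
  Relation.ReflTransGen (fun a b => ∃ c, CStep a c b) L L'

/-- Active participants: those mapped to a protocol other than `end`. -/
def Config.Active (L : Config) (p : String) : Prop :=
  ∃ T, L p = some T ∧ T ≠ .done

/-- Deadlock freedom: at every reachable configuration,
    either a transition is enabled or no participant is active. -/
def DeadlockFree (L : Config) : Prop :=
  ∀ L', Reach L L' → (∃ c L'', CStep L' c L'') ∨ (∀ p, ¬ L'.Active p)

def CAct.participates (c : CAct) (p : String) : Prop :=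
  c.sender = p ∨ c.receiver = p

/-- Liveness: at every reachable configuration, every active participant can
    eventually participate in a communication transition. -/
def Live (L : Config) : Prop :=
  ∀ L', Reach L L' → ∀ p, L'.Active p →
    ∃ L'' c L''', Reach L' L'' ∧ CStep L'' c L''' ∧ c.participates p

theorem Reach.exists_cStep {L L' L'' : Config} {c : CAct} (hr : Reach L L')
    (hs : CStep L' c L'') : ∃ c L'', CStep L c L'' := by
  rcases hr.cases_head with rfl | ⟨L₁, ⟨c₁, h₁⟩, -⟩
  · exact ⟨c, L'', hs⟩
  · exact ⟨c₁, L₁, h₁⟩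

/-- Every live local configuration is deadlock-free. -/
theorem live_deadlockFree (L : Config) (h : Live L) : DeadlockFree L := by
  intro L' hL'
  by_cases hact : ∃ p, L'.Active p
  · obtain ⟨p, hp⟩ := hact
    obtain ⟨_, _, _, hr, hs, -⟩ := h L' hL' p hp
    exact Or.inl (hr.exists_cStep hs)
  · exact Or.inr (not_exists.mp hact)
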